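/- arXiv:2105.12767 — 8 statements merged into one kernel-verified Lean document; each statement's English description precedes it below -/
import Mathlib

section
/- Let R, R̃ : Fin L → ℝ³ be two families of nuclear positions and δ_R ≥ 0 a real number such that ‖R̃_ℓ − R_ℓ‖ ≤ δ_R for every ℓ. Define for a family of positions S : Fin L → ℝ³ the operator U(S) on the η-particle Hilbert space ℂ^{Gᶯ} by U(S) = −(4π/Ω) · Σ_{ℓ=1}^{L} Σ_{j=1}^{η} Σ_{p,q ∈ G, p ≠ q} ζ_ℓ · (exp(i k_{q−p}·S_ℓ)/‖k_{p−q}‖²) · (|p⟩⟨q|)_j. Then ‖U(R̃) − U(R)‖ ≤ (2 δ_R η λ_ζ / Ω^{2/3}) · Σ_{ν ∈ G₀} 1/‖ν‖, where the norm on the left is the operator norm. -/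
open scoped Classical

noncomputable section

/-- The set `G` of plane-wave indices. -/
def Gfin (n_p : ℕ) : Finset (Fin 3 → ℤ) :=
  Fintype.piFinset fun _ => Finset.Icc (-(2 ^ (n_p - 1) - 1)) (2 ^ (n_p - 1) - 1)

/-- `G₀`: differences of frequencies in the enlarged box, excluding the zero mode. -/
def G0fin (n_p : ℕ) : Finset (Fin 3 → ℤ) :=
  (Fintype.piFinset fun _ => Finset.Icc (-(2 ^ n_p - 1)) (2 ^ n_p - 1)).erase 0

/-- Euclidean norm of an integer 3-vector. -/
def enorm3 (ν : Fin 3 → ℤ) : ℝ := Real.sqrt (∑ i, ((ν i : ℝ)) ^ 2)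

/-- The reciprocal-lattice vector `k_ν = (2π/Ω^{1/3})·ν ∈ ℝ³`. -/
def kvec (Ω : ℝ) (ν : Fin 3 → ℤ) : EuclideanSpace ℝ (Fin 3) :=
  (2 * Real.pi / Ω ^ ((1 : ℝ) / 3)) •
    (WithLp.equiv 2 (Fin 3 → ℝ)).symm fun i => (ν i : ℝ)

/-- The rank-one operator `(|p⟩⟨q|)_j` on the `η`-particle space, as a matrix. -/
def ketbra {n_p η : ℕ} (j : Fin η) (p q : ↥(Gfin n_p)) :
    Matrix (Fin η → ↥(Gfin n_p)) (Fin η → ↥(Gfin n_p)) ℂ :=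
  fun g f => if g j = p ∧ f j = q ∧ ∀ i, i ≠ j → g i = f i then 1 else 0

/-- Operator (ℓ² → ℓ²) norm of a matrix. -/
def matOpNorm {ι : Type*} [Fintype ι] [DecidableEq ι] (A : Matrix ι ι ℂ) : ℝ :=
  ‖LinearMap.toContinuousLinearMap (Matrix.toEuclideanLin A)‖

/-- The electron–nucleus potential operator `U(S)`. -/
def Uop (n_p η L : ℕ) (Ω : ℝ) (ζ : Fin L → ℝ) (S : Fin L → EuclideanSpace ℝ (Fin 3)) :
    Matrix (Fin η → ↥(Gfin n_p)) (Fin η → ↥(Gfin n_p)) ℂ :=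
  (-(4 * Real.pi / Ω : ℝ) : ℂ) • ∑ ℓ : Fin L, ∑ j : Fin η,
    ∑ p : ↥(Gfin n_p), ∑ q : ↥(Gfin n_p),
      if p = q then 0 else
        ((Complex.ofReal (ζ ℓ) *
            Complex.exp (Complex.I *
              Complex.ofReal
                (inner ℝ (kvec Ω ((q : Fin 3 → ℤ) - (p : Fin 3 → ℤ))) (S ℓ)))) /
          Complex.ofReal (‖kvec Ω ((p : Fin 3 → ℤ) - (q : Fin 3 → ℤ))‖ ^ 2)) •
          ketbra j p q


/-! The difference `U(R̃) − U(R)` is a sum, over nuclei `ℓ`, registers `j` and momentum transfers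
`ν ∈ G₀`, of scalar coefficients times the shifts `∑ₚ (|p⟩⟨p + ν|)_j`. Each shift has at most one
unit entry in every row and column, so the Schur test bounds its operator norm by one. Since
`t ↦ e^{it}` is 1-Lipschitz, the coefficient `ζ_ℓ e^{i k_ν·S}/‖k_ν‖²` moves by at most
`ζ_ℓ δ_R / ‖k_ν‖` when `S` moves by `δ_R`; with `‖k_ν‖ = 2π‖ν‖/Ω^{1/3}` the triangle inequality
gives the bound. -/

open scoped Matrix.Norms.L2Operator

theorem Complex.norm_exp_I_mul_ofReal_sub_exp_I_mul_ofReal_le (a b : ℝ) :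
    ‖exp (I * a) - exp (I * b)‖ ≤ |a - b| := by
  have hfactor : exp (I * a) - exp (I * b) = exp (I * b) * (exp (I * ↑(a - b)) - 1) := by
    rw [mul_sub, ← exp_add, ofReal_sub]; ring_nf
  rw [hfactor, norm_mul, norm_exp_I_mul_ofReal, one_mul, ← Real.norm_eq_abs]
  exact Real.norm_exp_I_mul_ofReal_sub_one_le

namespace Matrix

variable {𝕜 m n : Type*} [RCLike 𝕜] [Fintype m] [Fintype n] [DecidableEq n]

theorem l2_opNorm_le_one_of_sum_norm_le_one {A : Matrix m n 𝕜}
    (hrow : ∀ i, ∑ j, ‖A i j‖ ≤ 1) (hcol : ∀ j, ∑ i, ‖A i j‖ ≤ 1) : ‖A‖ ≤ 1 := by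
  rw [l2_opNorm_def]
  refine ContinuousLinearMap.opNorm_le_bound _ zero_le_one fun x => ?_
  rw [one_mul]
  refine (pow_le_pow_iff_left₀ (norm_nonneg _) (norm_nonneg _) two_ne_zero).mp ?_
  simp only [LinearEquiv.trans_apply, LinearMap.coe_toContinuousLinearMap', toLpLin_apply,
    EuclideanSpace.norm_sq_eq, mulVec, dotProduct]
  calc ∑ i, ‖∑ j, A i j * x j‖ ^ 2
      ≤ ∑ i, (∑ j, ‖A i j‖) * ∑ j, ‖A i j‖ * ‖x j‖ ^ 2 := by
        gcongr with i
        refine (pow_le_pow_left₀ (norm_nonneg _)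
          (norm_sum_le_of_le _ fun j _ => norm_mul_le _ _) 2).trans ?_
        exact Finset.sum_sq_le_sum_mul_sum_of_sq_le_mul _ (fun _ _ => norm_nonneg _)
          (fun _ _ => by positivity) fun _ _ => le_of_eq (by ring)
    _ ≤ ∑ i, ∑ j, ‖A i j‖ * ‖x j‖ ^ 2 := by
        gcongr with i
        exact mul_le_of_le_one_left (by positivity) (hrow i)
    _ = ∑ j, (∑ i, ‖A i j‖) * ‖x j‖ ^ 2 := by
        rw [Finset.sum_comm]; simp only [Finset.sum_mul]
    _ ≤ ∑ j, ‖x j‖ ^ 2 := by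
        gcongr with j
        exact mul_le_of_le_one_left (by positivity) (hcol j)

end Matrix

theorem matOpNorm_eq_l2_opNorm {ι : Type*} [Fintype ι] [DecidableEq ι] (A : Matrix ι ι ℂ) :
    matOpNorm A = ‖A‖ :=
  rfl

theorem kvec_neg (Ω : ℝ) (ν : Fin 3 → ℤ) : kvec Ω (-ν) = -kvec Ω ν := by
  ext i
  simp [kvec]

theorem norm_kvec (Ω : ℝ) (hΩ : 0 ≤ Ω) (ν : Fin 3 → ℤ) :
    ‖kvec Ω ν‖ = 2 * Real.pi / Ω ^ ((1 : ℝ) / 3) * enorm3 ν := by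
  rw [kvec, norm_smul, Real.norm_of_nonneg (by positivity), EuclideanSpace.norm_eq, enorm3]
  simp

theorem sub_mem_G0fin {n_p : ℕ} {p q : Fin 3 → ℤ} (hp : p ∈ Gfin n_p) (hq : q ∈ Gfin n_p)
    (hpq : q ≠ p) : q - p ∈ G0fin n_p := by
  -- `n_p - 1` truncates at `n_p = 0`, where `G = {0}`
  have hpow : (2 : ℤ) ^ (n_p - 1) * 2 ≤ 2 ^ n_p + 1 := by
    rcases n_p with _ | n
    · norm_num
    · simp [pow_succ]
  simp only [Gfin, G0fin, Fintype.mem_piFinset, Finset.mem_Icc, Finset.mem_erase] at hp hq ⊢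
  refine ⟨sub_ne_zero.mpr hpq, fun i => ?_⟩
  have := hp i
  have := hq i
  simp only [Pi.sub_apply]
  omega

theorem sum_norm_ite_one_le_one {α 𝕜 : Type*} [Fintype α] [SeminormedRing 𝕜] [NormOneClass 𝕜]
    (P : α → Prop) [DecidablePred P] (hP : ∀ a b, P a → P b → a = b) :
    ∑ a, ‖if P a then (1 : 𝕜) else 0‖ ≤ 1 := by
  simp only [apply_ite norm, norm_one, norm_zero, Finset.sum_boole]
  exact_mod_cast Finset.card_le_one.mpr fun a ha b hb =>
    hP a b (Finset.mem_filter.mp ha).2 (Finset.mem_filter.mp hb).2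

section MomentumShift

variable {n_p η : ℕ}

/-- `∑ₚ (|p⟩⟨p + ν|)_j`, truncated to the box `G`. -/
def momentumShift (j : Fin η) (ν : Fin 3 → ℤ) :
    Matrix (Fin η → ↥(Gfin n_p)) (Fin η → ↥(Gfin n_p)) ℂ :=
  Matrix.of fun g f => if (f j : Fin 3 → ℤ) - g j = ν ∧ ∀ i, i ≠ j → g i = f i then 1 else 0

theorem sum_norm_momentumShift_row_le_one (j : Fin η) (ν : Fin 3 → ℤ)
    (g : Fin η → ↥(Gfin n_p)) : ∑ f, ‖momentumShift j ν g f‖ ≤ 1 := by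
  refine sum_norm_ite_one_le_one _ fun f f' ⟨hν, hoff⟩ ⟨hν', hoff'⟩ => funext fun i => ?_
  by_cases hij : i = j
  · subst hij
    exact Subtype.ext (sub_left_injective (hν.trans hν'.symm))
  · exact (hoff i hij).symm.trans (hoff' i hij)

theorem sum_norm_momentumShift_col_le_one (j : Fin η) (ν : Fin 3 → ℤ)
    (f : Fin η → ↥(Gfin n_p)) : ∑ g, ‖momentumShift j ν g f‖ ≤ 1 := by
  refine sum_norm_ite_one_le_one _ fun g g' ⟨hν, hoff⟩ ⟨hν', hoff'⟩ => funext fun i => ?_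
  by_cases hij : i = j
  · subst hij
    exact Subtype.ext (sub_right_injective (hν.trans hν'.symm))
  · exact (hoff i hij).trans (hoff' i hij).symm

theorem norm_momentumShift_le_one (j : Fin η) (ν : Fin 3 → ℤ) :
    ‖(momentumShift j ν : Matrix (Fin η → ↥(Gfin n_p)) _ ℂ)‖ ≤ 1 :=
  Matrix.l2_opNorm_le_one_of_sum_norm_le_one (sum_norm_momentumShift_row_le_one j ν)
    (sum_norm_momentumShift_col_le_one j ν)

theorem sum_ketbra_eq_sum_momentumShift (j : Fin η) (D : (Fin 3 → ℤ) → ℂ) :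
    ∑ p : ↥(Gfin n_p), ∑ q : ↥(Gfin n_p),
        (if p = q then 0 else D ((q : Fin 3 → ℤ) - p) • ketbra j p q) =
      ∑ ν ∈ G0fin n_p, D ν • momentumShift j ν := by
  ext g f
  simp only [Matrix.sum_apply, Matrix.smul_apply, apply_ite (fun M : Matrix _ _ ℂ => M g f),
    Matrix.zero_apply, ketbra, momentumShift, Matrix.of_apply, smul_eq_mul, mul_ite, mul_one,
    mul_zero]
  by_cases hoff : ∀ i, i ≠ j → g i = f i
  · simp only [eq_true hoff, and_true]
    rw [Finset.sum_ite_eq (G0fin n_p), Finset.sum_eq_single (g j) (fun p _ hp => by simp [Ne.symm hp]) (by simp),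
      Finset.sum_eq_single (f j) (fun q _ hq => by simp [Ne.symm hq]) (by simp)]
    by_cases hgf : g j = f j
    · simp [hgf, G0fin]
    · rw [if_neg hgf, if_pos ⟨rfl, rfl⟩,
        if_pos (sub_mem_G0fin (g j).2 (f j).2 fun he => hgf (Subtype.ext he.symm))]
  · simp [hoff]

end MomentumShift

theorem norm_sum_smul_momentumShift_le {n_p η : ℕ} (j : Fin η) (s : Finset (Fin 3 → ℤ))
    (a : (Fin 3 → ℤ) → ℂ) :
    ‖∑ ν ∈ s, a ν • (momentumShift j ν : Matrix (Fin η → ↥(Gfin n_p)) _ ℂ)‖ ≤ ∑ ν ∈ s, ‖a ν‖ :=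
  (norm_sum_le _ _).trans <| Finset.sum_le_sum fun ν _ =>
    (norm_smul_le _ _).trans <|
      mul_le_of_le_one_right (norm_nonneg _) (norm_momentumShift_le_one j ν)

/-- The Fourier coefficient `ζ e^{i k_ν·S} / ‖k_ν‖²` of the Coulomb potential of a charge `ζ`
at `S`. -/
def nuclearCoeff (Ω ζ : ℝ) (S : EuclideanSpace ℝ (Fin 3)) (ν : Fin 3 → ℤ) : ℂ :=
  ζ * Complex.exp (Complex.I * inner ℝ (kvec Ω ν) S) / (‖kvec Ω ν‖ ^ 2 : ℝ)

theorem norm_nuclearCoeff_sub_le (Ω ζ : ℝ) (R' R : EuclideanSpace ℝ (Fin 3)) (ν : Fin 3 → ℤ) :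
    ‖nuclearCoeff Ω ζ R' ν - nuclearCoeff Ω ζ R ν‖ ≤ |ζ| * ‖R' - R‖ / ‖kvec Ω ν‖ := by
  set k := kvec Ω ν
  have hphase : ‖Complex.exp (Complex.I * inner ℝ k R') - Complex.exp (Complex.I * inner ℝ k R)‖
      ≤ ‖k‖ * ‖R' - R‖ := by
    refine (Complex.norm_exp_I_mul_ofReal_sub_exp_I_mul_ofReal_le _ _).trans ?_
    rw [← inner_sub_right]
    exact abs_real_inner_le_norm _ _
  rcases eq_or_ne ‖k‖ 0 with hk | hk
  · simp [nuclearCoeff, k, hk]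
  calc ‖nuclearCoeff Ω ζ R' ν - nuclearCoeff Ω ζ R ν‖
      = |ζ| * ‖Complex.exp (Complex.I * inner ℝ k R') - Complex.exp (Complex.I * inner ℝ k R)‖
          / ‖k‖ ^ 2 := by
        rw [nuclearCoeff, nuclearCoeff, ← sub_div, ← mul_sub, norm_div, norm_mul,
          Complex.norm_real, Complex.norm_real, Real.norm_eq_abs, norm_pow, norm_norm]
    _ ≤ |ζ| * (‖k‖ * ‖R' - R‖) / ‖k‖ ^ 2 := by gcongr
    _ = |ζ| * ‖R' - R‖ / ‖k‖ := by field_simp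

theorem Uop_eq_sum_momentumShift (n_p η L : ℕ) (Ω : ℝ) (ζ : Fin L → ℝ)
    (S : Fin L → EuclideanSpace ℝ (Fin 3)) :
    Uop n_p η L Ω ζ S = (-(4 * Real.pi / Ω : ℝ) : ℂ) • ∑ ℓ, ∑ j : Fin η,
      ∑ ν ∈ G0fin n_p, nuclearCoeff Ω (ζ ℓ) (S ℓ) ν • momentumShift j ν := by
  rw [Uop]
  refine congrArg _ (Finset.sum_congr rfl fun ℓ _ => Finset.sum_congr rfl fun j _ => ?_)
  rw [← sum_ketbra_eq_sum_momentumShift]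
  refine Finset.sum_congr rfl fun p _ => Finset.sum_congr rfl fun q _ => ?_
  rw [nuclearCoeff, ← neg_sub (q : Fin 3 → ℤ), kvec_neg, norm_neg]

theorem Uop_sub_Uop (n_p η L : ℕ) (Ω : ℝ) (ζ : Fin L → ℝ)
    (R' R : Fin L → EuclideanSpace ℝ (Fin 3)) :
    Uop n_p η L Ω ζ R' - Uop n_p η L Ω ζ R = (-(4 * Real.pi / Ω : ℝ) : ℂ) • ∑ ℓ, ∑ j : Fin η,
      ∑ ν ∈ G0fin n_p,
        (nuclearCoeff Ω (ζ ℓ) (R' ℓ) ν - nuclearCoeff Ω (ζ ℓ) (R ℓ) ν) • momentumShift j ν := by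
  simp only [Uop_eq_sum_momentumShift, ← smul_sub, ← Finset.sum_sub_distrib, sub_smul]

theorem matOpNorm_Uop_sub_Uop_le (n_p η L : ℕ) (Ω : ℝ) (hΩ : 0 ≤ Ω) (ζ : Fin L → ℝ)
    (R' R : Fin L → EuclideanSpace ℝ (Fin 3)) :
    matOpNorm (Uop n_p η L Ω ζ R' - Uop n_p η L Ω ζ R) ≤ 4 * Real.pi / Ω *
      ∑ ℓ, ∑ _j : Fin η, ∑ ν ∈ G0fin n_p, |ζ ℓ| * ‖R' ℓ - R ℓ‖ / ‖kvec Ω ν‖ := by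
  rw [matOpNorm_eq_l2_opNorm, Uop_sub_Uop, norm_smul, norm_neg, Complex.norm_real,
    Real.norm_of_nonneg (by positivity)]
  gcongr
  refine (norm_sum_le _ _).trans <| Finset.sum_le_sum fun ℓ _ => ?_
  refine (norm_sum_le _ _).trans <| Finset.sum_le_sum fun j _ => ?_
  exact (norm_sum_smul_momentumShift_le j _ _).trans <|
    Finset.sum_le_sum fun ν _ => norm_nuclearCoeff_sub_le _ _ _ _ _

theorem four_pi_div_eq_two_div_rpow_mul {Ω : ℝ} (hΩ : 0 < Ω) :
    4 * Real.pi / Ω = 2 / Ω ^ ((2 : ℝ) / 3) * (2 * Real.pi / Ω ^ ((1 : ℝ) / 3)) := by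
  have hsplit : Ω ^ ((2 : ℝ) / 3) * Ω ^ ((1 : ℝ) / 3) = Ω := by
    rw [← Real.rpow_add hΩ]; norm_num
  field_simp
  linear_combination 4 * hsplit

theorem stmt_0_general (n_p η L : ℕ)
    (Ω : ℝ) (hΩ : 0 < Ω) (ζ : Fin L → ℝ) (hζ : ∀ ℓ, 0 < ζ ℓ)
    (R R' : Fin L → EuclideanSpace ℝ (Fin 3))
    (δR : ℝ) (hclose : ∀ ℓ, ‖R' ℓ - R ℓ‖ ≤ δR) :
    matOpNorm (Uop n_p η L Ω ζ R' - Uop n_p η L Ω ζ R)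
      ≤ (2 * δR * η * (∑ ℓ, ζ ℓ) / Ω ^ ((2 : ℝ) / 3)) *
          ∑ ν ∈ G0fin n_p, 1 / enorm3 ν := by
  calc matOpNorm (Uop n_p η L Ω ζ R' - Uop n_p η L Ω ζ R)
      ≤ 4 * Real.pi / Ω * ∑ ℓ, ∑ _j : Fin η, ∑ ν ∈ G0fin n_p, ζ ℓ * δR / ‖kvec Ω ν‖ := by
        refine (matOpNorm_Uop_sub_Uop_le n_p η L Ω hΩ.le ζ R' R).trans ?_
        gcongr with ℓ _ _ _ ν
        · exact (hζ ℓ).le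
        · exact (abs_of_pos (hζ ℓ)).le
        · exact hclose ℓ
    _ = _ := by
        have hterm : ∀ ℓ ν, ζ ℓ * δR / ‖kvec Ω ν‖ =
            ζ ℓ * (δR / (2 * Real.pi / Ω ^ ((1 : ℝ) / 3)) * (1 / enorm3 ν)) := fun _ _ => by
          rw [norm_kvec Ω hΩ.le]; ring
        simp only [hterm, Finset.sum_const, Finset.card_univ, Fintype.card_fin, nsmul_eq_mul,
          ← Finset.mul_sum, ← Finset.sum_mul]
        rw [four_pi_div_eq_two_div_rpow_mul hΩ]
        field_simp

/-- Stability of the nuclear potential under perturbation of the nuclear positions: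
if `‖R̃_ℓ − R_ℓ‖ ≤ δ_R` for all `ℓ`, then
`‖U(R̃) − U(R)‖ ≤ (2 δ_R η λ_ζ / Ω^{2/3}) · Σ_{ν ∈ G₀} 1/‖ν‖`. -/
theorem stmt_0 (n_p η L : ℕ) (hnp : 0 < n_p) (hη : 1 ≤ η) (hL : 1 ≤ L)
    (Ω : ℝ) (hΩ : 0 < Ω) (ζ : Fin L → ℝ) (hζ : ∀ ℓ, 0 < ζ ℓ)
    (R R' : Fin L → EuclideanSpace ℝ (Fin 3))
    (δR : ℝ) (hδR : 0 ≤ δR) (hclose : ∀ ℓ, ‖R' ℓ - R ℓ‖ ≤ δR) :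
    matOpNorm (Uop n_p η L Ω ζ R' - Uop n_p η L Ω ζ R)
      ≤ (2 * δR * η * (∑ ℓ, ζ ℓ) / Ω ^ ((2 : ℝ) / 3)) *
          ∑ ν ∈ G0fin n_p, 1 / enorm3 ν :=
  stmt_0_general n_p η L Ω hΩ ζ hζ R R' δR hclose

end
end

section
/- Let H₁, H₂ : ℝ → B(𝓗) be continuous maps with H₁(t) and H₂(t) self-adjoint for every t, and let U₁, U₂ : ℝ → B(𝓗) satisfy U₁(0) = U₂(0) = I, U₁(t) and U₂(t) unitary for every t, and Uₖ'(t) = −i Hₖ(t) Uₖ(t) for every t and k = 1, 2. Then for every t ≥ 0, ‖U₁(t) − U₂(t)‖ ≤ ∫₀ᵗ ‖H₁(s) − H₂(s)‖ ds. -/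
/-!
Compare the two propagators through `W s = U₂(s)⋆ U₁(s)`. Since `U₂` is unitary,
`‖U₁(t) − U₂(t)‖ = ‖W t − W 0‖`, and the Schrödinger equations give
`W' = i U₂⋆ (H₂ − H₁) U₁`, whose norm is `‖H₁ − H₂‖` because the outer factors are unitary.
The mean value inequality, with `∫₀ᵗ ‖H₁ − H₂‖` as the comparison function, concludes.
-/

open Complex

theorem norm_sub_le_integral_of_norm_deriv_le {E : Type*} [NormedAddCommGroup E]
    [NormedSpace ℝ E] {f f' : ℝ → E} {g : ℝ → ℝ} {a b : ℝ} (hab : a ≤ b)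
    (hf : ∀ s, HasDerivAt f (f' s) s) (hg : Continuous g)
    (bound : ∀ s ∈ Set.Ico a b, ‖f' s‖ ≤ g s) :
    ‖f b - f a‖ ≤ ∫ s in a..b, g s :=
  image_norm_le_of_norm_deriv_right_le_deriv_boundary (f := fun s => f s - f a)
    (fun s _ => ((hf s).sub_const _).continuousAt.continuousWithinAt)
    (fun s _ => ((hf s).sub_const _).hasDerivWithinAt) (by simp)
    (fun s => (hg.integral_hasStrictDerivAt a s).hasDerivAt) bound ⟨hab, le_rfl⟩

section CStarAlgebra

variable {A : Type*} [CStarAlgebra A]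

theorem norm_sub_eq_norm_star_mul_sub_one {u v : A} (hv : v ∈ unitary A) :
    ‖u - v‖ = ‖star v * u - 1‖ := by
  rw [← CStarRing.norm_mem_unitary_mul (star v * u - 1) hv, mul_sub, ← mul_assoc,
    Unitary.mul_star_self_of_mem hv, one_mul, mul_one]

theorem norm_star_mul_mul_of_mem_unitary {u v : A} (hu : u ∈ unitary A) (hv : v ∈ unitary A)
    (a : A) : ‖star u * a * v‖ = ‖a‖ := by
  rw [CStarRing.norm_mul_mem_unitary _ hv,
    CStarRing.norm_mem_unitary_mul _ (Unitary.star_mem hu)]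

theorem hasDerivAt_star_mul_of_schrodinger {H₁ H₂ U₁ U₂ : ℝ → A} {t : ℝ}
    (hH₂ : IsSelfAdjoint (H₂ t))
    (hU₁ : HasDerivAt U₁ (-(I • (H₁ t * U₁ t))) t)
    (hU₂ : HasDerivAt U₂ (-(I • (H₂ t * U₂ t))) t) :
    HasDerivAt (fun s => star (U₂ s) * U₁ s) (I • (star (U₂ t) * (H₂ t - H₁ t) * U₁ t)) t := by
  refine (hU₂.star.mul hU₁).congr_deriv ?_
  simp only [star_neg, star_smul, star_mul, hH₂.star_eq, Complex.star_def, conj_I, neg_smul,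
    mul_sub, sub_mul, smul_sub, mul_neg, neg_neg, smul_mul_assoc, mul_smul_comm, mul_assoc]
  abel

end CStarAlgebra

theorem stmt_6_general {𝓗 : Type*} [NormedAddCommGroup 𝓗] [InnerProductSpace ℂ 𝓗]
    [CompleteSpace 𝓗] (H₁ H₂ : ℝ → 𝓗 →L[ℂ] 𝓗)
    (hH₁cont : Continuous H₁) (hH₂cont : Continuous H₂)
    (hH₂sa : ∀ t, IsSelfAdjoint (H₂ t))
    (U₁ U₂ : ℝ → 𝓗 →L[ℂ] 𝓗)
    (hU₁0 : U₁ 0 = 1) (hU₂0 : U₂ 0 = 1)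
    (hU₁unit : ∀ t, U₁ t ∈ unitary (𝓗 →L[ℂ] 𝓗))
    (hU₂unit : ∀ t, U₂ t ∈ unitary (𝓗 →L[ℂ] 𝓗))
    (hU₁deriv : ∀ t, HasDerivAt U₁ (-(Complex.I • (H₁ t * U₁ t))) t)
    (hU₂deriv : ∀ t, HasDerivAt U₂ (-(Complex.I • (H₂ t * U₂ t))) t) :
    ∀ t : ℝ, 0 ≤ t → ‖U₁ t - U₂ t‖ ≤ ∫ s in (0 : ℝ)..t, ‖H₁ s - H₂ s‖ := by
  intro t ht
  have hW0 : star (U₂ 0) * U₁ 0 = 1 := by simp [hU₁0, hU₂0]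
  calc ‖U₁ t - U₂ t‖ = ‖star (U₂ t) * U₁ t - star (U₂ 0) * U₁ 0‖ := by
        rw [hW0, norm_sub_eq_norm_star_mul_sub_one (hU₂unit t)]
    _ ≤ ∫ s in (0 : ℝ)..t, ‖H₁ s - H₂ s‖ :=
        norm_sub_le_integral_of_norm_deriv_le ht
          (fun s => hasDerivAt_star_mul_of_schrodinger (hH₂sa s) (hU₁deriv s) (hU₂deriv s))
          (hH₁cont.sub hH₂cont).norm fun s _ => by
            rw [norm_smul, norm_I, one_mul,
              norm_star_mul_mul_of_mem_unitary (hU₂unit s) (hU₁unit s), norm_sub_rev]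

/-- If `U₁, U₂` are unitary-valued solutions of the Schrödinger equations
`Uₖ' = −i Hₖ Uₖ` with `U₁(0) = U₂(0) = I` for continuous self-adjoint Hamiltonians
`H₁, H₂`, then `‖U₁(t) − U₂(t)‖ ≤ ∫₀ᵗ ‖H₁(s) − H₂(s)‖ ds` for all `t ≥ 0`. -/
theorem stmt_6 {𝓗 : Type*} [NormedAddCommGroup 𝓗] [InnerProductSpace ℂ 𝓗]
    [CompleteSpace 𝓗] (H₁ H₂ : ℝ → 𝓗 →L[ℂ] 𝓗)
    (hH₁cont : Continuous H₁) (hH₂cont : Continuous H₂)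
    (hH₁sa : ∀ t, IsSelfAdjoint (H₁ t)) (hH₂sa : ∀ t, IsSelfAdjoint (H₂ t))
    (U₁ U₂ : ℝ → 𝓗 →L[ℂ] 𝓗)
    (hU₁0 : U₁ 0 = 1) (hU₂0 : U₂ 0 = 1)
    (hU₁unit : ∀ t, U₁ t ∈ unitary (𝓗 →L[ℂ] 𝓗))
    (hU₂unit : ∀ t, U₂ t ∈ unitary (𝓗 →L[ℂ] 𝓗))
    (hU₁deriv : ∀ t, HasDerivAt U₁ (-(Complex.I • (H₁ t * U₁ t))) t)
    (hU₂deriv : ∀ t, HasDerivAt U₂ (-(Complex.I • (H₂ t * U₂ t))) t) :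
    ∀ t : ℝ, 0 ≤ t → ‖U₁ t - U₂ t‖ ≤ ∫ s in (0 : ℝ)..t, ‖H₁ s - H₂ s‖ :=
  stmt_6_general H₁ H₂ hH₁cont hH₂cont hH₂sa U₁ U₂ hU₁0 hU₂0 hU₁unit hU₂unit hU₁deriv hU₂deriv
end

section
/- For every τ ∈ ℝ and every δ ≥ 0, the midpoint-rule error bound ‖δ·H(τ) − ∫_{τ−δ/2}^{τ+δ/2} H(s) ds‖ ≤ (δ³/6)·‖A‖²·‖B‖ holds, where the integral is the Bochner integral of the continuous operator-valued function H. -/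
/-!
`H` is differentiable with `H' = Hrot A ⁅iA, B⁆`, and conjugation by the unitaries `exp(±itA)`
preserves norms, so `H'` is Lipschitz with constant `‖⁅iA, ⁅iA, B⁆⁆‖ ≤ 4‖A‖²‖B‖`. For any
function `f` whose derivative is `K`-Lipschitz, the symmetric second difference
`φ(x) = f(τ + x) + f(τ - x) - 2 f(τ)` vanishes at `0` and satisfies `‖φ'(x)‖ ≤ 2Kx`, hence
`‖φ(x)‖ ≤ Kx²`; integrating over `[0, δ/2]` bounds the midpoint-rule error by `Kδ³/24`.
-/

/-- The interaction-picture Hamiltonian `H(t) = exp(itA) · B · exp(−itA)`. -/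
noncomputable def Hrot {𝓗 : Type*} [NormedAddCommGroup 𝓗] [InnerProductSpace ℂ 𝓗]
    [CompleteSpace 𝓗] (A B : 𝓗 →L[ℂ] 𝓗) (t : ℝ) : 𝓗 →L[ℂ] 𝓗 :=
  NormedSpace.exp (((t : ℂ) * Complex.I) • A) * B *
    NormedSpace.exp ((-(t : ℂ) * Complex.I) • A)

open NormedSpace NNReal

theorem norm_lie_le {R : Type*} [NormedRing R] (a b : R) : ‖⁅a, b⁆‖ ≤ 2 * ‖a‖ * ‖b‖ := by
  rw [Ring.lie_def]
  calc ‖a * b - b * a‖ ≤ ‖a‖ * ‖b‖ + ‖b‖ * ‖a‖ :=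
        (norm_sub_le _ _).trans (add_le_add (norm_mul_le _ _) (norm_mul_le _ _))
    _ = 2 * ‖a‖ * ‖b‖ := by ring

section MidpointRule

variable {E : Type*} [NormedAddCommGroup E] [NormedSpace ℝ E] {f f' : ℝ → E} {K : ℝ≥0}

theorem norm_add_sub_two_smul_le_of_lipschitzWith_deriv (hf : ∀ s, HasDerivAt f (f' s) s)
    (hf' : LipschitzWith K f') (τ : ℝ) {x : ℝ} (hx : 0 ≤ x) :
    ‖f (τ + x) + f (τ - x) - (2 : ℝ) • f τ‖ ≤ K * x ^ 2 := by
  have hφ : ∀ y, HasDerivAt (fun y => f (τ + y) + f (τ - y) - (2 : ℝ) • f τ)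
      (f' (τ + y) - f' (τ - y)) y := fun y => by
    have hright := (hf (τ + y)).comp_const_add τ y
    have hleft := (hf (τ - y)).comp_const_sub τ y
    simpa only [← sub_eq_add_neg, Pi.add_apply] using (hright.add hleft).sub_const ((2 : ℝ) • f τ)
  have hquad : ∀ y, HasDerivAt (fun y : ℝ => K * y ^ 2) (2 * K * y) y := fun y => by
    simpa [mul_comm, mul_left_comm] using (hasDerivAt_pow 2 y).const_mul (K : ℝ)
  refine image_norm_le_of_norm_deriv_right_le_deriv_boundary
    (fun y _ => (hφ y).continuousAt.continuousWithinAt) (fun y _ => (hφ y).hasDerivWithinAt)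
    (by simp [two_smul]) hquad (fun y hy => ?_) ⟨hx, le_rfl⟩
  calc ‖f' (τ + y) - f' (τ - y)‖ ≤ K * dist (τ + y) (τ - y) := by
        rw [← dist_eq_norm]; exact hf'.dist_le_mul _ _
    _ = 2 * K * y := by
        rw [Real.dist_eq, show τ + y - (τ - y) = 2 * y by ring, abs_of_nonneg (by linarith [hy.1])]
        ring

theorem norm_smul_sub_integral_le_of_lipschitzWith_deriv [CompleteSpace E]
    (hf : ∀ s, HasDerivAt f (f' s) s) (hf' : LipschitzWith K f') (τ : ℝ) {δ : ℝ} (hδ : 0 ≤ δ) :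
    ‖δ • f τ - ∫ s in (τ - δ / 2)..(τ + δ / 2), f s‖ ≤ K * δ ^ 3 / 24 := by
  have hcont : Continuous f := continuous_iff_continuousAt.2 fun s => (hf s).continuousAt
  have hint : ∀ g : ℝ → ℝ, Continuous g →
      IntervalIntegrable (fun x => f (g x)) MeasureTheory.volume 0 (δ / 2) :=
    fun g hg => (hcont.comp hg).intervalIntegrable _ _
  have hfold : ∫ s in (τ - δ / 2)..(τ + δ / 2), f s
      = ∫ x in (0 : ℝ)..(δ / 2), (f (τ + x) + f (τ - x)) := by
    rw [← intervalIntegral.integral_add_adjacent_intervals (b := τ) (hcont.intervalIntegrable _ _)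
        (hcont.intervalIntegrable _ _),
      intervalIntegral.integral_add (hint _ (by fun_prop)) (hint _ (by fun_prop)),
      intervalIntegral.integral_comp_add_left, intervalIntegral.integral_comp_sub_left,
      add_zero, sub_zero, add_comm]
  have herror : δ • f τ - ∫ s in (τ - δ / 2)..(τ + δ / 2), f s
      = -∫ x in (0 : ℝ)..(δ / 2), (f (τ + x) + f (τ - x) - (2 : ℝ) • f τ) := by
    rw [intervalIntegral.integral_sub ((hint _ (by fun_prop)).add (hint _ (by fun_prop)))
      intervalIntegrable_const, intervalIntegral.integral_const, hfold, smul_smul]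
    module
  calc ‖δ • f τ - ∫ s in (τ - δ / 2)..(τ + δ / 2), f s‖
      ≤ ∫ x in (0 : ℝ)..(δ / 2), (K : ℝ) * x ^ 2 := by
        rw [herror, norm_neg]
        refine intervalIntegral.norm_integral_le_of_norm_le (by positivity)
          (Filter.Eventually.of_forall fun x hx => ?_)
          ((by fun_prop : Continuous fun x : ℝ => (K : ℝ) * x ^ 2).intervalIntegrable _ _)
        exact norm_add_sub_two_smul_le_of_lipschitzWith_deriv hf hf' τ hx.1.le
    _ = K * δ ^ 3 / 24 := by
        rw [intervalIntegral.integral_const_mul, integral_pow]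
        ring

end MidpointRule

section ConjugationByExp

variable {𝔸 : Type*} [NormedRing 𝔸] [NormedAlgebra ℝ 𝔸] [CompleteSpace 𝔸]

theorem hasDerivAt_exp_smul_mul_mul_exp_smul_neg (X B : 𝔸) (t : ℝ) :
    HasDerivAt (fun s : ℝ => exp (s • X) * B * exp (s • -X))
      (exp (t • X) * ⁅X, B⁆ * exp (t • -X)) t := by
  refine (((hasDerivAt_exp_smul_const X t).mul_const B).mul
    (hasDerivAt_exp_smul_const' (-X) t)).congr_deriv ?_
  rw [Ring.lie_def]
  noncomm_ring

theorem norm_exp_mul_mul_exp_neg [StarRing 𝔸] [CStarRing 𝔸] [ContinuousStar 𝔸] {X : 𝔸}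
    (hX : X ∈ skewAdjoint 𝔸) (B : 𝔸) : ‖exp X * B * exp (-X)‖ = ‖B‖ := by
  let +nondep : NormedAlgebra ℚ 𝔸 := .restrictScalars ℚ ℝ 𝔸
  rw [CStarRing.norm_mul_mem_unitary _ (exp_mem_unitary_of_mem_skewAdjoint (neg_mem hX)),
    CStarRing.norm_mem_unitary_mul _ (exp_mem_unitary_of_mem_skewAdjoint hX)]

end ConjugationByExp

section Hrot

variable {𝓗 : Type*} [NormedAddCommGroup 𝓗] [InnerProductSpace ℂ 𝓗] [CompleteSpace 𝓗]
  {A : 𝓗 →L[ℂ] 𝓗}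

theorem Hrot_eq (A B : 𝓗 →L[ℂ] 𝓗) (t : ℝ) :
    Hrot A B t = exp (t • (Complex.I • A)) * B * exp (t • -(Complex.I • A)) := by
  rw [Hrot, neg_mul, neg_smul, mul_smul, Complex.coe_smul, smul_neg]

theorem hasDerivAt_Hrot (A B : 𝓗 →L[ℂ] 𝓗) (t : ℝ) :
    HasDerivAt (Hrot A B) (Hrot A ⁅Complex.I • A, B⁆ t) t := by
  simpa only [← Hrot_eq] using hasDerivAt_exp_smul_mul_mul_exp_smul_neg (Complex.I • A) B t

theorem norm_Hrot (hA : IsSelfAdjoint A) (B : 𝓗 →L[ℂ] 𝓗) (t : ℝ) : ‖Hrot A B t‖ = ‖B‖ := by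
  rw [Hrot_eq, smul_neg]
  exact norm_exp_mul_mul_exp_neg
    (skewAdjoint.smul_mem t (hA.smul_mem_skewAdjoint Complex.conj_I)) B

theorem lipschitzWith_Hrot (hA : IsSelfAdjoint A) (B : 𝓗 →L[ℂ] 𝓗) :
    LipschitzWith ‖⁅Complex.I • A, B⁆‖₊ (Hrot A B) :=
  lipschitzWith_of_nnnorm_deriv_le (fun t => (hasDerivAt_Hrot A B t).differentiableAt)
    fun t => by
      rw [(hasDerivAt_Hrot A B t).deriv, ← NNReal.coe_le_coe, coe_nnnorm, coe_nnnorm, norm_Hrot hA]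

end Hrot

theorem stmt_9_general {𝓗 : Type*} [NormedAddCommGroup 𝓗] [InnerProductSpace ℂ 𝓗]
    [CompleteSpace 𝓗] (A B : 𝓗 →L[ℂ] 𝓗)
    (hA : IsSelfAdjoint A) (τ δ : ℝ) (hδ : 0 ≤ δ) :
    ‖δ • Hrot A B τ - ∫ s in (τ - δ / 2)..(τ + δ / 2), Hrot A B s‖
      ≤ (δ ^ 3 / 6) * ‖A‖ ^ 2 * ‖B‖ := by
  have hIA : ‖Complex.I • A‖ = ‖A‖ := by rw [norm_smul, Complex.norm_I, one_mul]
  have hK : ‖⁅Complex.I • A, ⁅Complex.I • A, B⁆⁆‖ ≤ 4 * ‖A‖ ^ 2 * ‖B‖ :=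
    calc _ ≤ 2 * ‖A‖ * (2 * ‖A‖ * ‖B‖) := by
          grw [norm_lie_le, norm_lie_le, hIA]
      _ = 4 * ‖A‖ ^ 2 * ‖B‖ := by ring
  calc _ ≤ ‖⁅Complex.I • A, ⁅Complex.I • A, B⁆⁆‖₊ * δ ^ 3 / 24 :=
        norm_smul_sub_integral_le_of_lipschitzWith_deriv (hasDerivAt_Hrot A B)
          (lipschitzWith_Hrot hA _) τ hδ
    _ ≤ 4 * ‖A‖ ^ 2 * ‖B‖ * δ ^ 3 / 24 := by
        rw [coe_nnnorm]; gcongr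
    _ = (δ ^ 3 / 6) * ‖A‖ ^ 2 * ‖B‖ := by ring

/-- Midpoint-rule error bound:
`‖δ·H(τ) − ∫_{τ−δ/2}^{τ+δ/2} H(s) ds‖ ≤ (δ³/6)·‖A‖²·‖B‖`. -/
theorem stmt_9 {𝓗 : Type*} [NormedAddCommGroup 𝓗] [InnerProductSpace ℂ 𝓗]
    [CompleteSpace 𝓗] (A B : 𝓗 →L[ℂ] 𝓗)
    (hA : IsSelfAdjoint A) (hB : IsSelfAdjoint B) (τ δ : ℝ) (hδ : 0 ≤ δ) :
    ‖δ • Hrot A B τ - ∫ s in (τ - δ / 2)..(τ + δ / 2), Hrot A B s‖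
      ≤ (δ ^ 3 / 6) * ‖A‖ ^ 2 * ‖B‖ :=
  stmt_9_general A B hA τ δ hδ
end

section
/- Let Λ > 0 and Γ₁, Γ₂ ≥ 0 be real numbers, T > 0, and let f : ℝ → ℝ be continuous and satisfy f(δ) ≤ ∫₀^δ ( (1/2)·(Λ Γ₁ + Γ₂/4)·s² + Λ·f(s) ) ds for every δ ∈ [0, T]. Then for every δ ∈ [0, T], f(δ) ≤ ((4 Λ Γ₁ + Γ₂)/(8 Λ³)) · (2·(e^{Λδ} − 1) − Λδ·(2 + Λδ)). -/
/-!
Let `g δ = ∫₀^δ (c s² + Λ f s) ds`, so that `f ≤ g` on `[0, T]`, and let `B` be the explicit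
solution of `B' = c x² + Λ B`, `B 0 = 0`. Then `g - B` vanishes at `0` and
`(g - B)' = Λ (f - B) ≤ Λ (g - B)`, so Grönwall's inequality gives `g ≤ B`, hence `f ≤ B`.
-/

open Real Set

theorem nonpos_of_deriv_le_mul_self {h h' : ℝ → ℝ} {K a b : ℝ} (hc : ContinuousOn h (Icc a b))
    (hderiv : ∀ x ∈ Ico a b, HasDerivWithinAt h (h' x) (Ici x) x) (ha : h a ≤ 0)
    (hbound : ∀ x ∈ Ico a b, h' x ≤ K * h x) : ∀ x ∈ Icc a b, h x ≤ 0 := by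
  intro x hx
  have := le_gronwallBound_of_liminf_deriv_right_le (ε := 0) hc
    (fun x hx _ hr => (hderiv x hx).liminf_right_slope_le hr) ha
    (fun x hx => by simpa using hbound x hx) x hx
  rwa [gronwallBound_ε0_δ0] at this

theorem le_of_le_integral_of_hasDerivAt {φ f B : ℝ → ℝ} {K T : ℝ} (hK : 0 ≤ K)
    (hφ : Continuous φ) (hf : Continuous f) (hB : ∀ x, HasDerivAt B (φ x + K * B x) x)
    (hB0 : B 0 = 0) (hineq : ∀ δ ∈ Icc 0 T, f δ ≤ ∫ s in (0 : ℝ)..δ, (φ s + K * f s)) :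
    ∀ δ ∈ Icc 0 T, f δ ≤ B δ := by
  set g : ℝ → ℝ := fun δ => ∫ s in (0 : ℝ)..δ, (φ s + K * f s)
  have hcont : Continuous fun s => φ s + K * f s := by fun_prop
  have hg : ∀ x, HasDerivAt g (φ x + K * f x) x := fun x =>
    intervalIntegral.integral_hasDerivAt_right (hcont.intervalIntegrable _ _)
      (hcont.stronglyMeasurableAtFilter _ _) hcont.continuousAt
  have hgB : ∀ x ∈ Icc 0 T, g x - B x ≤ 0 := by
    refine nonpos_of_deriv_le_mul_self (K := K) (h' := fun x => K * (f x - B x)) ?_ ?_ ?_ ?_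
    · exact fun x _ => ((hg x).sub (hB x)).continuousAt.continuousWithinAt
    · exact fun x _ => ((hg x).sub (hB x)).hasDerivWithinAt.congr_deriv (by ring)
    · simp [g, hB0]
    · exact fun x hx =>
        mul_le_mul_of_nonneg_left (by linarith [hineq x (Ico_subset_Icc_self hx)]) hK
  exact fun δ hδ => (hineq δ hδ).trans (sub_nonpos.mp (hgB δ hδ))

noncomputable def quadraticForcingSolution (Λ c x : ℝ) : ℝ :=
  c / Λ ^ 3 * (2 * (exp (Λ * x) - 1) - Λ * x * (2 + Λ * x))

theorem quadraticForcingSolution_zero (Λ c : ℝ) : quadraticForcingSolution Λ c 0 = 0 := by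
  simp [quadraticForcingSolution]

theorem hasDerivAt_quadraticForcingSolution {Λ : ℝ} (hΛ : Λ ≠ 0) (c x : ℝ) :
    HasDerivAt (quadraticForcingSolution Λ c)
      (c * x ^ 2 + Λ * quadraticForcingSolution Λ c x) x := by
  have hlin : HasDerivAt (fun x => Λ * x) Λ x := by simpa using (hasDerivAt_id x).const_mul Λ
  have hexp : HasDerivAt (fun x => exp (Λ * x)) (exp (Λ * x) * Λ) x := hlin.exp
  refine ((((hexp.sub_const 1).const_mul 2).sub (hlin.mul (hlin.const_add 2))).const_mul
    (c / Λ ^ 3)).congr_deriv ?_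
  unfold quadraticForcingSolution
  field_simp
  ring

theorem stmt_11_general (Λ Γ₁ Γ₂ T : ℝ) (hΛ : 0 < Λ)
    (f : ℝ → ℝ) (hf : Continuous f)
    (hineq : ∀ δ ∈ Set.Icc (0 : ℝ) T,
      f δ ≤ ∫ s in (0 : ℝ)..δ, ((1 / 2) * (Λ * Γ₁ + Γ₂ / 4) * s ^ 2 + Λ * f s)) :
    ∀ δ ∈ Set.Icc (0 : ℝ) T,
      f δ ≤ ((4 * Λ * Γ₁ + Γ₂) / (8 * Λ ^ 3)) *
        (2 * (Real.exp (Λ * δ) - 1) - Λ * δ * (2 + Λ * δ)) := by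
  intro δ hδ
  have hbound := le_of_le_integral_of_hasDerivAt hΛ.le (by fun_prop) hf
    (hasDerivAt_quadraticForcingSolution hΛ.ne' _) (quadraticForcingSolution_zero _ _) hineq δ hδ
  convert hbound using 1
  unfold quadraticForcingSolution
  ring

/-- Integral (Grönwall-type) inequality: if a continuous `f : ℝ → ℝ` satisfies
`f(δ) ≤ ∫₀^δ ((1/2)(ΛΓ₁ + Γ₂/4) s² + Λ f(s)) ds` on `[0, T]`, then on `[0, T]`
`f(δ) ≤ ((4ΛΓ₁ + Γ₂)/(8Λ³))·(2(e^{Λδ} − 1) − Λδ(2 + Λδ))`. -/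
theorem stmt_11 (Λ Γ₁ Γ₂ T : ℝ) (hΛ : 0 < Λ) (hΓ₁ : 0 ≤ Γ₁) (hΓ₂ : 0 ≤ Γ₂)
    (hT : 0 < T) (f : ℝ → ℝ) (hf : Continuous f)
    (hineq : ∀ δ ∈ Set.Icc (0 : ℝ) T,
      f δ ≤ ∫ s in (0 : ℝ)..δ, ((1 / 2) * (Λ * Γ₁ + Γ₂ / 4) * s ^ 2 + Λ * f s)) :
    ∀ δ ∈ Set.Icc (0 : ℝ) T,
      f δ ≤ ((4 * Λ * Γ₁ + Γ₂) / (8 * Λ ^ 3)) *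
        (2 * (Real.exp (Λ * δ) - 1) - Λ * δ * (2 + Λ * δ)) :=
  stmt_11_general Λ Γ₁ Γ₂ T hΛ f hf hineq
end

section
/- For all positive integers n and b, let x = n / 2^{⌈log₂ n⌉}, θ₀ = arcsin(1/(2√x)), and let θ be the real number θ₀ − (π/2^b)²·(2x − 1)/√(4x − 1) rounded to the nearest integer multiple of 2π/2^b, i.e. θ = (2π/2^b) · round( (2^b/(2π)) · ( θ₀ − (π/2^b)²·(2x − 1)/√(4x − 1) ) ). Then the success probability P = x·( (1 + (2 − 4x)·sin²θ)² + sin²(2θ) ) satisfies P ≥ 1 − (3/2)²·(π/2^b)². -/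
/-!
Write `θ = θ₀ + δ`, where `sin² θ₀ = 1/(4x)`. The success probability is
`P = 1 - (1 - x)(4x sin² θ - 1)² = 1 - 4(1 - x)(4x - 1) F(δ)²` with `F(δ) = sin δ cos δ + c sin² δ`
and `c = (2x - 1)/√(4x - 1) ∈ [0, 3/5]`, while `4(1 - x)(4x - 1) ≤ 9/4`. Rounding puts `δ` in the
window `|δ + c ε²| ≤ ε`, `ε = π/2^b`, and shifting the window by `c ε²` exactly compensates the
quadratic term of `F(δ) ≈ δ + c δ²`, so that `|F(δ)| ≤ ε`; for `ε ≥ 1/2` cruder bounds suffice.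
-/

open Real

noncomputable def angleDefect (c δ : ℝ) : ℝ := sin δ * cos δ + c * sin δ ^ 2

section AngleDefect

variable {c δ : ℝ}

lemma sin_mul_cos_le_self (hδ : 0 ≤ δ) : sin δ * cos δ ≤ δ := by
  have h := sin_le (by linarith : 0 ≤ 2 * δ)
  rw [sin_two_mul] at h
  linarith

lemma sin_sq_le_sq (δ : ℝ) : sin δ ^ 2 ≤ δ ^ 2 :=
  sq_le_sq.2 abs_sin_le_abs

lemma neg_half_le_angleDefect (hc : 0 ≤ c) : -(1 / 2) ≤ angleDefect c δ := by
  have h := neg_one_le_sin (2 * δ)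
  rw [sin_two_mul] at h
  unfold angleDefect
  nlinarith [sq_nonneg (sin δ)]

lemma abs_angleDefect_le (hc : 0 ≤ c) : |angleDefect c δ| ≤ 1 / 2 + c := by
  have h := sin_le_one (2 * δ)
  rw [sin_two_mul] at h
  have hsq : c * sin δ ^ 2 ≤ c := mul_le_of_le_one_right hc (sin_sq_le_one δ)
  refine abs_le.2 ⟨by linarith [neg_half_le_angleDefect (δ := δ) hc], ?_⟩
  unfold angleDefect
  linarith

lemma angleDefect_nonneg (hc : 0 ≤ c) (hδ₀ : 0 ≤ δ) (hδ : δ ≤ π / 2) :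
    0 ≤ angleDefect c δ := by
  have hsin := sin_nonneg_of_nonneg_of_le_pi hδ₀ (by linarith [pi_pos])
  have hcos := cos_nonneg_of_neg_pi_div_two_le_of_le (by linarith [pi_pos]) hδ
  unfold angleDefect
  positivity

lemma angleDefect_le_mul_sin_sq (hδ : -(π / 2) ≤ δ) (hδ₀ : δ ≤ 0) :
    angleDefect c δ ≤ c * sin δ ^ 2 := by
  have hsin := sin_nonpos_of_nonpos_of_neg_pi_le hδ₀ (by linarith [pi_pos])
  have hcos := cos_nonneg_of_neg_pi_div_two_le_of_le hδ (by linarith [pi_pos])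
  unfold angleDefect
  nlinarith [mul_nonpos_of_nonpos_of_nonneg hsin hcos]

lemma angleDefect_le_add_mul_sq (hc : 0 ≤ c) (hδ : 0 ≤ δ) :
    angleDefect c δ ≤ δ + c * δ ^ 2 :=
  add_le_add (sin_mul_cos_le_self hδ) (mul_le_mul_of_nonneg_left (sin_sq_le_sq δ) hc)

/-- Since `sin t ≤ t`, `c (t² - sin² t) = c (t + sin t)(t - sin t) ≤ t - sin t ≤ t - sin t cos t`
as soon as `2 c t ≤ 1`. -/
lemma sub_mul_sq_neg_le_angleDefect_neg {t : ℝ} (hc : 0 ≤ c) (ht : 0 ≤ t) (htπ : t ≤ π)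
    (hct : 2 * c * t ≤ 1) : -(t - c * t ^ 2) ≤ angleDefect c (-t) := by
  have hsin₀ := sin_nonneg_of_nonneg_of_le_pi ht htπ
  have hsin := sin_le ht
  have hfac : c * (t + sin t) ≤ 1 := by nlinarith
  unfold angleDefect
  rw [sin_neg, cos_neg]
  nlinarith [mul_le_mul_of_nonneg_left hfac (sub_nonneg.2 hsin),
    mul_le_mul_of_nonneg_left (cos_le_one t) hsin₀]

end AngleDefect

section Window

variable {c ε : ℝ}

lemma add_mul_sq_le_of_le_sub {s : ℝ} (hc : 0 ≤ c) (hs : 0 ≤ s) (h : s ≤ ε - c * ε ^ 2) :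
    s + c * s ^ 2 ≤ ε := by
  have hsε : s ^ 2 ≤ ε ^ 2 := pow_le_pow_left₀ hs (by nlinarith) 2
  nlinarith [mul_le_mul_of_nonneg_left hsε hc]

lemma sub_mul_sq_le_of_le_add {t : ℝ} (hc : 0 ≤ c) (hε : 0 ≤ ε) (h : t ≤ ε + c * ε ^ 2) :
    t - c * t ^ 2 ≤ ε := by
  rcases le_or_gt t ε with htε | htε
  · nlinarith [mul_nonneg hc (sq_nonneg t)]
  · have hεt : ε ^ 2 ≤ t ^ 2 := pow_le_pow_left₀ hε htε.le 2
    nlinarith [mul_le_mul_of_nonneg_left hεt hc]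

end Window

section Regimes

variable {c δ ε : ℝ}

lemma abs_angleDefect_le_of_half_le (hc : 0 ≤ c) (hcε : c ≤ ε) (hε : 1 / 2 ≤ ε)
    (hεπ : ε + c * ε ^ 2 ≤ π / 2) (hw : |δ + c * ε ^ 2| ≤ ε) : |angleDefect c δ| ≤ ε := by
  obtain ⟨hlo, hhi⟩ := abs_le.1 hw
  refine abs_le.2 ⟨by linarith [neg_half_le_angleDefect (δ := δ) hc], ?_⟩
  rcases le_or_gt 0 δ with hδ | hδ
  · exact (angleDefect_le_add_mul_sq hc hδ).trans
      (add_mul_sq_le_of_le_sub hc hδ (by linarith))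
  · calc angleDefect c δ ≤ c * sin δ ^ 2 := angleDefect_le_mul_sin_sq (by linarith) hδ.le
      _ ≤ c := mul_le_of_le_one_right hc (sin_sq_le_one δ)
      _ ≤ ε := hcε

lemma abs_angleDefect_le_of_le_two_fifths (hc : 0 ≤ c) (hc₁ : c ≤ 3 / 5) (hε₀ : 0 ≤ ε)
    (hε : ε ≤ 2 / 5) (hw : |δ + c * ε ^ 2| ≤ ε) : |angleDefect c δ| ≤ ε := by
  obtain ⟨hlo, hhi⟩ := abs_le.1 hw
  have hcε : c * ε ^ 2 ≤ 3 / 5 * (2 / 5) ^ 2 := by gcongr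
  have hπ := pi_gt_three
  rcases le_or_gt 0 δ with hδ | hδ
  · refine abs_le.2 ⟨?_, ?_⟩
    · linarith [angleDefect_nonneg hc hδ (by nlinarith)]
    · exact (angleDefect_le_add_mul_sq hc hδ).trans
        (add_mul_sq_le_of_le_sub hc hδ (by linarith))
  · refine abs_le.2 ⟨?_, ?_⟩
    · have h := sub_mul_sq_neg_le_angleDefect_neg (t := -δ) hc (by linarith) (by linarith)
        (by nlinarith)
      rw [neg_neg] at h
      linarith [sub_mul_sq_le_of_le_add (t := -δ) hc hε₀ (by linarith)]
    · have hδsq : δ ^ 2 ≤ (ε + c * ε ^ 2) ^ 2 := sq_le_sq' (by linarith) (by linarith)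
      calc angleDefect c δ ≤ c * sin δ ^ 2 := angleDefect_le_mul_sin_sq (by linarith) hδ.le
        _ ≤ c * (ε + c * ε ^ 2) ^ 2 :=
          mul_le_mul_of_nonneg_left ((sin_sq_le_sq δ).trans hδsq) hc
        _ ≤ ε := by nlinarith [mul_nonneg hc hε₀, mul_nonneg (mul_nonneg hc hε₀) hε₀]

lemma abs_angleDefect_le_pi_div_two_pow (hc : 0 ≤ c) (hc₁ : c ≤ 3 / 5) (b : ℕ)
    (hw : |δ + c * (π / 2 ^ b) ^ 2| ≤ π / 2 ^ b) : |angleDefect c δ| ≤ π / 2 ^ b := by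
  have hπ := pi_gt_three
  have hπ' := pi_lt_d2
  rcases Nat.lt_or_ge b 2 with hb | hb
  · have h2b : (2 : ℝ) ^ b ≤ 2 := by
      exact_mod_cast (Nat.pow_le_pow_right two_pos (Nat.le_of_lt_succ hb)).trans_eq (pow_one 2)
    have hε : π / 2 ≤ π / 2 ^ b := div_le_div_of_nonneg_left pi_pos.le (by positivity) h2b
    exact (abs_angleDefect_le hc).trans (by linarith)
  rcases hb.eq_or_lt with rfl | hb
  · refine abs_angleDefect_le_of_half_le hc (by linarith) (by linarith) ?_ hw
    nlinarith
  · have h2b : (8 : ℝ) ≤ 2 ^ b := by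
      exact_mod_cast (Nat.pow_le_pow_right two_pos hb).trans_eq' (by norm_num)
    have hε : π / 2 ^ b ≤ π / 8 := div_le_div_of_nonneg_left pi_pos.le (by norm_num) h2b
    exact abs_angleDefect_le_of_le_two_fifths hc hc₁ (by positivity) (by linarith) hw

end Regimes

lemma four_mul_sin_sq_add_sub_one {x q θ₀ : ℝ} (hq : q ≠ 0) (hq₂ : q ^ 2 = 4 * x - 1)
    (hsin : 4 * x * sin θ₀ ^ 2 = 1) (hcos : cos θ₀ = q * sin θ₀) (δ : ℝ) :
    4 * x * sin (θ₀ + δ) ^ 2 - 1 = 2 * q * angleDefect ((2 * x - 1) / q) δ := by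
  unfold angleDefect
  rw [sin_add, hcos]
  field_simp
  linear_combination (cos δ + q * sin δ) ^ 2 * hsin + sin_sq_add_cos_sq δ + sin δ ^ 2 * hq₂

lemma sin_sq_arcsin_inv_two_mul_sqrt {x : ℝ} (hx : 1 / 4 ≤ x) :
    4 * x * sin (arcsin (1 / (2 * √x))) ^ 2 = 1 ∧
      cos (arcsin (1 / (2 * √x))) = √(4 * x - 1) * sin (arcsin (1 / (2 * √x))) := by
  have hx₀ : 0 < x := by linarith
  have hsx : 0 < √x := sqrt_pos.2 hx₀
  have hle : 1 / (2 * √x) ≤ 1 := by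
    rw [div_le_one (by positivity)]
    nlinarith [sq_sqrt hx₀.le]
  rw [sin_arcsin (by linarith [show 0 ≤ 1 / (2 * √x) by positivity]) hle, cos_arcsin]
  refine ⟨by field_simp; rw [sq_sqrt hx₀.le]; ring, ?_⟩
  rw [← sqrt_sq (by positivity : 0 ≤ √(4 * x - 1) * (1 / (2 * √x)))]
  congr 1
  field_simp
  rw [sq_sqrt hx₀.le, sq_sqrt (by linarith)]
  ring

lemma div_sqrt_le_three_fifths {x : ℝ} (hx : 1 / 2 ≤ x) (hx₁ : x ≤ 1) :
    (2 * x - 1) / √(4 * x - 1) ≤ 3 / 5 := by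
  have hq := sqrt_pos.2 (by linarith : 0 < 4 * x - 1)
  have hq₂ := sq_sqrt (by linarith : 0 ≤ 4 * x - 1)
  rw [div_le_iff₀ hq]
  nlinarith [mul_nonneg (by linarith : (0:ℝ) ≤ 1 - x) (by linarith : (0:ℝ) ≤ 100 * x - 36)]

lemma four_mul_one_sub_mul_le (x : ℝ) : 4 * (1 - x) * (4 * x - 1) ≤ 9 / 4 := by
  nlinarith [sq_nonneg (8 * x - 5)]

lemma half_lt_div_two_pow_clog {n : ℕ} (hn : 0 < n) : 1 / 2 < (n : ℝ) / 2 ^ Nat.clog 2 n := by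
  rw [lt_div_iff₀ (by positivity)]
  suffices h : 2 ^ Nat.clog 2 n < 2 * n by
    have : ((2 ^ Nat.clog 2 n : ℕ) : ℝ) < ((2 * n : ℕ) : ℝ) := by exact_mod_cast h
    push_cast at this
    linarith
  rcases Nat.lt_or_ge n 2 with h | h
  · interval_cases n
    simp [Nat.clog_one_right]
  · have hpred := Nat.pow_pred_clog_lt_self one_lt_two h
    have hpos := Nat.clog_pos one_lt_two h
    rw [← Nat.succ_pred_eq_of_pos hpos, pow_succ]
    omega

lemma div_two_pow_clog_le_one (n : ℕ) : (n : ℝ) / 2 ^ Nat.clog 2 n ≤ 1 := by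
  rw [div_le_one (by positivity)]
  exact_mod_cast Nat.le_pow_clog one_lt_two n

lemma abs_mul_round_inv_mul_sub_le {h : ℝ} (hh : 0 < h) (y : ℝ) :
    |h * round (h⁻¹ * y) - y| ≤ h / 2 := by
  have hy : h * round (h⁻¹ * y) - y = h * (round (h⁻¹ * y) - h⁻¹ * y) := by
    field_simp
  rw [hy, abs_mul, abs_of_pos hh, abs_sub_comm]
  nlinarith [abs_sub_round (h⁻¹ * y)]

noncomputable def successProb (x θ : ℝ) : ℝ :=
  x * ((1 + (2 - 4 * x) * sin θ ^ 2) ^ 2 + sin (2 * θ) ^ 2)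

lemma successProb_eq (x θ : ℝ) :
    successProb x θ = 1 - (1 - x) * (4 * x * sin θ ^ 2 - 1) ^ 2 := by
  unfold successProb
  rw [sin_two_mul]
  linear_combination (4 * x * sin θ ^ 2) * sin_sq_add_cos_sq θ

theorem stmt_13_general (n b : ℕ) (hn : 0 < n) :
    let x : ℝ := n / 2 ^ Nat.clog 2 n
    let θ₀ : ℝ := Real.arcsin (1 / (2 * Real.sqrt x))
    let θ : ℝ := (2 * Real.pi / 2 ^ b) *
      (round ((2 ^ b / (2 * Real.pi)) *
        (θ₀ - (Real.pi / 2 ^ b) ^ 2 * (2 * x - 1) / Real.sqrt (4 * x - 1))) : ℤ)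
    x * ((1 + (2 - 4 * x) * Real.sin θ ^ 2) ^ 2 + Real.sin (2 * θ) ^ 2)
      ≥ 1 - (3 / 2) ^ 2 * (Real.pi / 2 ^ b) ^ 2 := by
  intro x θ₀ θ
  have hx : 1 / 2 < x := half_lt_div_two_pow_clog hn
  have hx₁ : x ≤ 1 := div_two_pow_clog_le_one n
  set ε := π / 2 ^ b
  set q := √(4 * x - 1)
  set c := (2 * x - 1) / q
  have hq : 0 < q := sqrt_pos.2 (by linarith)
  have hq₂ : q ^ 2 = 4 * x - 1 := sq_sqrt (by linarith)
  obtain ⟨hsin, hcos⟩ := sin_sq_arcsin_inv_two_mul_sqrt (x := x) (by linarith)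
  have hw : |θ - θ₀ + c * ε ^ 2| ≤ ε := by
    have hε : 0 < ε := by positivity
    have hround : (2 * ε)⁻¹ * (θ₀ - c * ε ^ 2) = 2 ^ b / (2 * π) *
        (θ₀ - (π / 2 ^ b) ^ 2 * (2 * x - 1) / √(4 * x - 1)) := by
      simp only [ε, c, q]
      field_simp
    have hθ : θ = 2 * ε * round ((2 * ε)⁻¹ * (θ₀ - c * ε ^ 2)) := by
      rw [hround]
      exact congrArg (· * _) (mul_div_assoc 2 π (2 ^ b))
    have h := abs_mul_round_inv_mul_sub_le (by positivity : 0 < 2 * ε) (θ₀ - c * ε ^ 2)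
    rwa [← hθ, mul_div_cancel_left₀ _ two_ne_zero, sub_sub_eq_add_sub, add_sub_right_comm] at h
  have hF : |angleDefect c (θ - θ₀)| ≤ ε :=
    abs_angleDefect_le_pi_div_two_pow (div_nonneg (by linarith) hq.le)
      (div_sqrt_le_three_fifths hx.le hx₁) b hw
  have hP : successProb x θ = 1 - 4 * (1 - x) * (4 * x - 1) * angleDefect c (θ - θ₀) ^ 2 := by
    rw [successProb_eq, ← add_sub_cancel θ₀ θ, four_mul_sin_sq_add_sub_one hq.ne' hq₂ hsin hcos,
      add_sub_cancel_left, ← hq₂]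
    ring
  change successProb x θ ≥ _
  rw [hP, ge_iff_le, sub_le_sub_iff_left]
  exact mul_le_mul ((four_mul_one_sub_mul_le x).trans_eq (by norm_num)) (sq_le_sq.2 (hF.trans (le_abs_self ε)))
    (sq_nonneg _) (by norm_num)

/-- Lower bound on the success probability of preparing an equal superposition over `n`
basis states using a `b`-bit ancilla rotation, with the adjusted rotation angle `θ`. -/
theorem stmt_13 (n b : ℕ) (hn : 0 < n) (hb : 0 < b) :
    let x : ℝ := n / 2 ^ Nat.clog 2 n
    let θ₀ : ℝ := Real.arcsin (1 / (2 * Real.sqrt x))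
    let θ : ℝ := (2 * Real.pi / 2 ^ b) *
      (round ((2 ^ b / (2 * Real.pi)) *
        (θ₀ - (Real.pi / 2 ^ b) ^ 2 * (2 * x - 1) / Real.sqrt (4 * x - 1))) : ℤ)
    x * ((1 + (2 - 4 * x) * Real.sin θ ^ 2) ^ 2 + Real.sin (2 * θ) ^ 2)
      ≥ 1 - (3 / 2) ^ 2 * (Real.pi / 2 ^ b) ^ 2 :=
  stmt_13_general n b hn
end

section
/- Let x be a real number with 1/2 < x ≤ 1, let θ₀ = arcsin(1/(2√x)), and let Δθ ∈ ℝ. Setting θ = θ₀ + Δθ, the exact identity x·( (1 + (2 − 4x)·sin²θ)² + sin²(2θ) ) = 1 − 4(1 − x)(4x − 1)·sin²(Δθ) + 4(1 − x)·( 2(4x − 1 − 2x²)·sin²(Δθ) − (2x − 1)·√(4x − 1)·sin(2Δθ) )·sin²(Δθ) holds. -/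
/-!
Writing `σ = sin² θ`, the left-hand side is
`x ((1 + (2 - 4x) σ)² + 4σ(1 - σ)) = 1 - (1 - x)(1 - 4xσ)²` for every `x` and `θ`.
Since `2√x sin θ₀ = 1` and `2√x cos θ₀ = √(4x - 1)`, the addition formula gives
`2√x sin θ = cos Δθ + √(4x - 1) sin Δθ`, whence
`1 - 4x sin² θ = 2 sin Δθ ((1 - 2x) sin Δθ - √(4x - 1) cos Δθ)`;
squaring this and using `cos² Δθ = 1 - sin² Δθ` yields the right-hand side.
-/

open Real

theorem mul_one_add_mul_sin_sq_sq_add_sin_two_mul_sq (x θ : ℝ) :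
    x * ((1 + (2 - 4 * x) * sin θ ^ 2) ^ 2 + sin (2 * θ) ^ 2)
      = 1 - (1 - x) * (1 - 4 * x * sin θ ^ 2) ^ 2 := by
  rw [sin_two_mul, mul_pow, mul_pow, cos_sq']
  ring

theorem sin_arcsin_one_div_two_sqrt {x : ℝ} (hx : 1 / 4 ≤ x) :
    sin (arcsin (1 / (2 * √x))) = 1 / (2 * √x) := by
  have hsqrt : 1 / 2 ≤ √x := le_sqrt_of_sq_le (by linarith)
  apply sin_arcsin (by linarith [show 0 ≤ 1 / (2 * √x) by positivity])
  rw [div_le_one (by linarith)]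
  linarith

theorem cos_arcsin_one_div_two_sqrt {x : ℝ} (hx : 1 / 4 ≤ x) :
    cos (arcsin (1 / (2 * √x))) = √(4 * x - 1) / (2 * √x) := by
  have hs : √x ^ 2 = x := sq_sqrt (by linarith)
  have hr : √(4 * x - 1) ^ 2 = 4 * x - 1 := sq_sqrt (by linarith)
  have hs0 : 0 < √x := sqrt_pos.mpr (by linarith)
  rw [cos_arcsin, ← sqrt_sq (by positivity : 0 ≤ √(4 * x - 1) / (2 * √x))]
  congr 1
  field_simp
  linear_combination 4 * hs - hr

theorem two_sqrt_mul_sin_arcsin_one_div_two_sqrt_add {x : ℝ} (hx : 1 / 4 ≤ x)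
    (Δθ : ℝ) :
    2 * √x * sin (arcsin (1 / (2 * √x)) + Δθ) = cos Δθ + √(4 * x - 1) * sin Δθ := by
  have hs0 : 0 < √x := sqrt_pos.mpr (by linarith)
  rw [sin_add, sin_arcsin_one_div_two_sqrt hx, cos_arcsin_one_div_two_sqrt hx]
  field_simp

theorem one_sub_four_mul_sin_arcsin_one_div_two_sqrt_add_sq {x : ℝ} (hx : 1 / 4 ≤ x)
    (Δθ : ℝ) :
    1 - 4 * x * sin (arcsin (1 / (2 * √x)) + Δθ) ^ 2
      = 2 * sin Δθ * ((1 - 2 * x) * sin Δθ - √(4 * x - 1) * cos Δθ) := by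
  have hS := two_sqrt_mul_sin_arcsin_one_div_two_sqrt_add hx Δθ
  have hs : √x ^ 2 = x := sq_sqrt (by linarith)
  have hr : √(4 * x - 1) ^ 2 = 4 * x - 1 := sq_sqrt (by linarith)
  set θ := arcsin (1 / (2 * √x)) + Δθ
  linear_combination (-(2 * √x * sin θ + cos Δθ + √(4 * x - 1) * sin Δθ)) * hS
    + 4 * sin θ ^ 2 * hs - sin Δθ ^ 2 * hr - sin_sq_add_cos_sq Δθ

theorem stmt_14_general (x Δθ : ℝ) (h1 : 1 / 2 < x) :
    x * ((1 + (2 - 4 * x) *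
            Real.sin (Real.arcsin (1 / (2 * Real.sqrt x)) + Δθ) ^ 2) ^ 2
          + Real.sin (2 * (Real.arcsin (1 / (2 * Real.sqrt x)) + Δθ)) ^ 2)
      = 1 - 4 * (1 - x) * (4 * x - 1) * Real.sin Δθ ^ 2
        + 4 * (1 - x) *
            (2 * (4 * x - 1 - 2 * x ^ 2) * Real.sin Δθ ^ 2
              - (2 * x - 1) * Real.sqrt (4 * x - 1) * Real.sin (2 * Δθ)) *
            Real.sin Δθ ^ 2 := by
  have hx : 1 / 4 ≤ x := by linarith
  have hr : √(4 * x - 1) ^ 2 = 4 * x - 1 := sq_sqrt (by linarith)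
  rw [mul_one_add_mul_sin_sq_sq_add_sin_two_mul_sq,
    one_sub_four_mul_sin_arcsin_one_div_two_sqrt_add_sq hx, sin_two_mul]
  linear_combination
    (-4 * (1 - x) * sin Δθ ^ 2) * (cos Δθ ^ 2 * hr + (4 * x - 1) * sin_sq_add_cos_sq Δθ)

/-- For `1/2 < x ≤ 1`, `θ₀ = arcsin(1/(2√x))` and `θ = θ₀ + Δθ`, the exact identity
`x·((1 + (2 − 4x)·sin²θ)² + sin²(2θ))
  = 1 − 4(1 − x)(4x − 1)·sin²(Δθ)
    + 4(1 − x)·(2(4x − 1 − 2x²)·sin²(Δθ) − (2x − 1)·√(4x − 1)·sin(2Δθ))·sin²(Δθ)`. -/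
theorem stmt_14 (x Δθ : ℝ) (h1 : 1 / 2 < x) (h2 : x ≤ 1) :
    x * ((1 + (2 - 4 * x) *
            Real.sin (Real.arcsin (1 / (2 * Real.sqrt x)) + Δθ) ^ 2) ^ 2
          + Real.sin (2 * (Real.arcsin (1 / (2 * Real.sqrt x)) + Δθ)) ^ 2)
      = 1 - 4 * (1 - x) * (4 * x - 1) * Real.sin Δθ ^ 2
        + 4 * (1 - x) *
            (2 * (4 * x - 1 - 2 * x ^ 2) * Real.sin Δθ ^ 2
              - (2 * x - 1) * Real.sqrt (4 * x - 1) * Real.sin (2 * Δθ)) *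
            Real.sin Δθ ^ 2 :=
  stmt_14_general x Δθ h1
end

section
/- For every positive integer b, setting m = 2^{b−1}, the inequality e · m · ln(1 + 1/m) · exp(−m·ln(1 + 1/m)) ≥ 1/(1 + 2^{−(2b+1)}) holds; equivalently, e · m · ln(1 + 1/m) / (1 + 1/m)^m ≥ 1/(1 + 1/(8m²)). -/
/-!
With `x = 1/m` and `t = log (1 + x) / x`, the left-hand side is `t · e^(1-t) = (1 - s) e^s` for
`s = 1 - t`. The cubic lower bound `log (1 + x) ≥ x - x²/2 + x³/5`, obtained from the Taylor bound
for `exp`, gives `0 ≤ s ≤ x/2 - x²/5`, and `(1 - s) e^s ≥ 1 - s²/2 - s³/2`, which is decreasing in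
`s`; what remains is a polynomial inequality in `x`. The case `m = 1` lies outside the range of the
polynomial bounds and is checked numerically.
-/

open Real

lemma cubic_le_log_one_add {x : ℝ} (hx0 : 0 ≤ x) (hx : x ≤ 1 / 2) :
    x - x ^ 2 / 2 + x ^ 3 / 5 ≤ log (1 + x) := by
  have hq0 : 0 ≤ x - x ^ 2 / 2 + x ^ 3 / 5 := by nlinarith
  have hq1 : x - x ^ 2 / 2 + x ^ 3 / 5 ≤ 1 := by nlinarith
  set q := x - x ^ 2 / 2 + x ^ 3 / 5
  rw [le_log_iff_exp_le (by linarith)]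
  calc exp q
      ≤ ∑ i ∈ Finset.range 3, q ^ i / i.factorial + q ^ 3 * (3 + 1) / (Nat.factorial 3 * 3) :=
        exp_bound' hq0 hq1 (by norm_num)
    _ = 1 + q + q ^ 2 / 2 + 2 * q ^ 3 / 9 := by
        simp only [Finset.sum_range_succ, Nat.factorial]; norm_num; ring
    _ ≤ 1 + x := by
        simp only [q]
        nlinarith [pow_nonneg hx0 3, pow_nonneg hx0 4, pow_nonneg hx0 5, pow_nonneg hx0 6,
          pow_nonneg hx0 7, pow_nonneg hx0 8]

lemma one_sub_mul_exp_ge {s : ℝ} (hs0 : 0 ≤ s) (hs1 : s ≤ 1) :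
    1 - s ^ 2 / 2 - s ^ 3 / 2 ≤ (1 - s) * exp s :=
  calc 1 - s ^ 2 / 2 - s ^ 3 / 2 = (1 - s) * (1 + s + s ^ 2 / 2) := by ring
    _ ≤ (1 - s) * exp s :=
        mul_le_mul_of_nonneg_left (quadratic_le_exp_of_nonneg hs0) (by linarith)

lemma one_le_one_add_sq_div_eight_mul_one_sub_mul_exp {x s : ℝ} (hx0 : 0 ≤ x) (hx : x ≤ 1 / 2)
    (hs0 : 0 ≤ s) (hs : s ≤ x / 2 - x ^ 2 / 5) :
    1 ≤ (1 + x ^ 2 / 8) * ((1 - s) * exp s) := by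
  have hs2 := pow_le_pow_left₀ hs0 hs 2
  have hs3 := pow_le_pow_left₀ hs0 hs 3
  have hpoly : 1 ≤ (1 + x ^ 2 / 8) *
      (1 - (x / 2 - x ^ 2 / 5) ^ 2 / 2 - (x / 2 - x ^ 2 / 5) ^ 3 / 2) := by
    nlinarith [pow_nonneg hx0 3, pow_nonneg hx0 4, pow_nonneg hx0 5, pow_nonneg hx0 6,
      pow_nonneg hx0 7, pow_nonneg hx0 8]
  calc 1 ≤ (1 + x ^ 2 / 8) *
        (1 - (x / 2 - x ^ 2 / 5) ^ 2 / 2 - (x / 2 - x ^ 2 / 5) ^ 3 / 2) := hpoly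
    _ ≤ (1 + x ^ 2 / 8) * (1 - s ^ 2 / 2 - s ^ 3 / 2) := by gcongr
    _ ≤ (1 + x ^ 2 / 8) * ((1 - s) * exp s) := by
        gcongr
        exact one_sub_mul_exp_ge hs0 (by nlinarith)

lemma inv_one_add_sq_div_eight_le_mul_exp_one_sub {x : ℝ} (hx0 : 0 < x) (hx : x ≤ 1 / 2) :
    1 / (1 + x ^ 2 / 8) ≤ log (1 + x) / x * exp (1 - log (1 + x) / x) := by
  have ht_le : log (1 + x) / x ≤ 1 := by
    rw [div_le_one hx0]
    linarith [log_le_sub_one_of_pos (x := 1 + x) (by linarith)]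
  have ht_ge : 1 - (x / 2 - x ^ 2 / 5) ≤ log (1 + x) / x := by
    rw [le_div_iff₀ hx0]
    nlinarith [cubic_le_log_one_add hx0.le hx]
  have key := one_le_one_add_sq_div_eight_mul_one_sub_mul_exp (s := 1 - log (1 + x) / x)
    hx0.le hx (by linarith) (by linarith)
  rw [sub_sub_cancel] at key
  rw [div_le_iff₀ (by positivity)]
  linarith

lemma exp_one_mul_log_one_add_inv_mul_exp_neg_ge {m : ℝ} (hm : 2 ≤ m) :
    1 / (1 + 1 / (8 * m ^ 2)) ≤
      exp 1 * m * log (1 + 1 / m) * exp (-(m * log (1 + 1 / m))) := by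
  have key := inv_one_add_sq_div_eight_le_mul_exp_one_sub (x := 1 / m) (by positivity)
    (by rw [div_le_div_iff₀ (by positivity) (by norm_num)]; linarith)
  have ht : log (1 + 1 / m) / (1 / m) = m * log (1 + 1 / m) := by field_simp
  rw [ht] at key
  calc 1 / (1 + 1 / (8 * m ^ 2)) = 1 / (1 + (1 / m) ^ 2 / 8) := by ring
    _ ≤ m * log (1 + 1 / m) * exp (1 - m * log (1 + 1 / m)) := key
    _ = exp 1 * m * log (1 + 1 / m) * exp (-(m * log (1 + 1 / m))) := by
        rw [sub_eq_add_neg, exp_add]; ring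

lemma eight_div_nine_le_exp_one_mul_log_two_div_two : 8 / 9 ≤ exp 1 * log 2 / 2 := by
  nlinarith [exp_one_gt_d9, log_two_gt_d9]

/-- For every positive integer `b`, with `m = 2^{b−1}`,
`e · m · ln(1 + 1/m) · exp(−m·ln(1 + 1/m)) ≥ 1/(1 + 2^{−(2b+1)})`. -/
theorem stmt_17 (b : ℕ) (hb : 0 < b) :
    Real.exp 1 * (2 : ℝ) ^ (b - 1) * Real.log (1 + 1 / (2 : ℝ) ^ (b - 1)) *
        Real.exp (-((2 : ℝ) ^ (b - 1) * Real.log (1 + 1 / (2 : ℝ) ^ (b - 1))))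
      ≥ 1 / (1 + 1 / 2 ^ (2 * b + 1)) := by
  obtain ⟨k, rfl⟩ : ∃ k, b = k + 1 := ⟨b - 1, by omega⟩
  have h8m2 : (2 : ℝ) ^ (2 * (k + 1) + 1) = 8 * ((2 : ℝ) ^ k) ^ 2 := by ring
  rw [Nat.add_sub_cancel, h8m2, ge_iff_le]
  rcases k.eq_zero_or_pos with rfl | hk
  · norm_num [exp_neg, exp_log]
    linarith [eight_div_nine_le_exp_one_mul_log_two_div_two]
  · exact exp_one_mul_log_one_add_inv_mul_exp_neg_ge (le_self_pow₀ (by norm_num) hk.ne')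
end

section
/- Let ι be a finite type with a distinguished element 0, let E be a finite-dimensional complex inner product space, let α : ι → ℝ satisfy α_ℓ ≥ 0 for all ℓ with λ = Σ_ℓ α_ℓ > 0, and let (U_ℓ)_{ℓ ∈ ι} be a family of unitary operators on E. Let PREP be a unitary operator on the Hilbert space ℂ^ι (with standard orthonormal basis (e_ℓ)) such that PREP e₀ = Σ_ℓ √(α_ℓ/λ) e_ℓ, and let SEL be the operator on ℂ^ι ⊗ E determined by SEL(e_ℓ ⊗ ψ) = e_ℓ ⊗ U_ℓ ψ for all ℓ ∈ ι and ψ ∈ E. Then for every ψ ∈ E, applying (PREP ⊗ I), then SEL, then (PREP† ⊗ I) to e₀ ⊗ ψ and projecting the first factor onto e₀ yields ( ⟨e₀| ⊗ I ) (PREP† ⊗ I) SEL (PREP ⊗ I) (e₀ ⊗ ψ) = (1/λ) Σ_ℓ α_ℓ U_ℓ ψ. -/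
/-!
Write `a := PREP e₀`. Then `(PREP ⊗ I)(e₀ ⊗ ψ) = Σ_ℓ a_ℓ e_ℓ ⊗ ψ`, and `SEL` turns this into
`Σ_ℓ a_ℓ e_ℓ ⊗ U_ℓ ψ`. Since `⟨e₀, PREP† e_ℓ⟩ = conj ⟨e_ℓ, PREP e₀⟩ = conj a_ℓ`, the `e₀`-component
after `PREP† ⊗ I` is `Σ_ℓ |a_ℓ|² U_ℓ ψ`, and `|a_ℓ|² = α_ℓ / λ`.
-/

open ComplexConjugate

namespace EuclideanSpace

variable {𝕜 ι : Type*} [RCLike 𝕜] [Fintype ι] [DecidableEq ι]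

theorem sum_smul_single_one_apply (c : ι → 𝕜) (j : ι) :
    (∑ ℓ, c ℓ • single ℓ (1 : 𝕜)) j = c j := by
  simp [Pi.single_apply]

theorem adjoint_single_one_apply (A : EuclideanSpace 𝕜 ι →L[𝕜] EuclideanSpace 𝕜 ι) (i j : ι) :
    A.adjoint (single j 1) i = conj (A (single i 1) j) := by
  calc A.adjoint (single j 1) i
      = inner 𝕜 (single i (1 : 𝕜)) (A.adjoint (single j 1)) := by
        rw [inner_single_left, map_one, one_mul]
    _ = conj (A (single i 1) j) := by
        rw [ContinuousLinearMap.adjoint_inner_right, inner_single_right, one_mul]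

end EuclideanSpace

namespace LCU

variable {𝕜 ι E : Type*} [RCLike 𝕜] [Fintype ι] [DecidableEq ι] [AddCommGroup E] [Module 𝕜 E]

def tensorId (A : EuclideanSpace 𝕜 ι →L[𝕜] EuclideanSpace 𝕜 ι) (f : ι → E) : ι → E :=
  fun ℓ => ∑ ℓ', A (EuclideanSpace.single ℓ' 1) ℓ • f ℓ'

def select {F : Type*} [FunLike F E E] (U : ι → F) (f : ι → E) : ι → E :=
  fun ℓ => U ℓ (f ℓ)

theorem tensorId_pi_single (A : EuclideanSpace 𝕜 ι →L[𝕜] EuclideanSpace 𝕜 ι) (z ℓ : ι) (ψ : E) :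
    tensorId A (Pi.single z ψ) ℓ = A (EuclideanSpace.single z 1) ℓ • ψ := by
  simp [tensorId, Pi.single_apply]

theorem tensorId_adjoint_apply (A : EuclideanSpace 𝕜 ι →L[𝕜] EuclideanSpace 𝕜 ι) (f : ι → E)
    (z : ι) :
    tensorId A.adjoint f z = ∑ ℓ, conj (A (EuclideanSpace.single z 1) ℓ) • f ℓ := by
  simp only [tensorId, EuclideanSpace.adjoint_single_one_apply]

theorem tensorId_adjoint_select_tensorId_pi_single
    (A : EuclideanSpace 𝕜 ι →L[𝕜] EuclideanSpace 𝕜 ι)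
    {F : Type*} [FunLike F E E] [LinearMapClass F 𝕜 E E] (U : ι → F) (z : ι) (ψ : E) :
    tensorId A.adjoint (select U (tensorId A (Pi.single z ψ))) z =
      ∑ ℓ, ((‖A (EuclideanSpace.single z 1) ℓ‖ ^ 2 : ℝ) : 𝕜) • U ℓ ψ := by
  simp only [tensorId_adjoint_apply, select, tensorId_pi_single, map_smul, smul_smul,
    RCLike.conj_mul, RCLike.ofReal_pow]

end LCU

theorem stmt_19_general {ι : Type*} [Fintype ι] [DecidableEq ι] (z : ι)
    {E : Type*} [NormedAddCommGroup E] [InnerProductSpace ℂ E]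
    (α : ι → ℝ) (hα : ∀ ℓ, 0 ≤ α ℓ)
    (lam : ℝ) (hlampos : 0 < lam)
    (U : ι → E →L[ℂ] E)
    (P : EuclideanSpace ℂ ι →L[ℂ] EuclideanSpace ℂ ι)
    (hP0 : P (EuclideanSpace.single z 1) =
      ∑ ℓ, ((Real.sqrt (α ℓ / lam) : ℝ) : ℂ) • EuclideanSpace.single ℓ 1)
    -- the tensor-product operators `PREP ⊗ I`, `PREP† ⊗ I` and `SEL`, realized on `ι → E`
    (prepT prepAdjT selT : (ι → E) → (ι → E))
    (hprepT : ∀ (f : ι → E) (ℓ : ι),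
      prepT f ℓ = ∑ ℓ', (P (EuclideanSpace.single ℓ' 1) ℓ) • f ℓ')
    (hprepAdjT : ∀ (f : ι → E) (ℓ : ι),
      prepAdjT f ℓ =
        ∑ ℓ', ((ContinuousLinearMap.adjoint P) (EuclideanSpace.single ℓ' 1) ℓ) • f ℓ')
    (hselT : ∀ (f : ι → E) (ℓ : ι), selT f ℓ = U ℓ (f ℓ)) :
    ∀ ψ : E, prepAdjT (selT (prepT (Pi.single z ψ))) z
      = (lam : ℂ)⁻¹ • ∑ ℓ, ((α ℓ : ℝ) : ℂ) • U ℓ ψ := by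
  intro ψ
  obtain rfl : prepT = LCU.tensorId P := funext₂ hprepT
  obtain rfl : prepAdjT = LCU.tensorId P.adjoint := funext₂ hprepAdjT
  obtain rfl : selT = LCU.select U := funext₂ hselT
  have hweight (ℓ : ι) : ‖P (EuclideanSpace.single z 1) ℓ‖ ^ 2 = α ℓ / lam := by
    rw [hP0, EuclideanSpace.sum_smul_single_one_apply, Complex.norm_real, Real.norm_eq_abs,
      abs_of_nonneg (Real.sqrt_nonneg _), Real.sq_sqrt (div_nonneg (hα ℓ) hlampos.le)]
  rw [LCU.tensorId_adjoint_select_tensorId_pi_single, Finset.smul_sum]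
  refine Finset.sum_congr rfl fun ℓ _ => ?_
  rw [smul_smul, hweight, div_eq_inv_mul]
  norm_cast

/-- The linear-combination-of-unitaries (LCU) block-encoding identity underlying the
qubitization algorithm, with `ℂ^ι ⊗ E` realized as the space of functions `ι → E`:
`(⟨e₀| ⊗ I)(PREP† ⊗ I)·SEL·(PREP ⊗ I)(e₀ ⊗ ψ) = (1/λ) Σ_ℓ α_ℓ U_ℓ ψ`. -/
theorem stmt_19 {ι : Type*} [Fintype ι] [DecidableEq ι] (z : ι)
    {E : Type*} [NormedAddCommGroup E] [InnerProductSpace ℂ E] [FiniteDimensional ℂ E]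
    (α : ι → ℝ) (hα : ∀ ℓ, 0 ≤ α ℓ)
    (lam : ℝ) (hlam : lam = ∑ ℓ, α ℓ) (hlampos : 0 < lam)
    (U : ι → E →L[ℂ] E) (hU : ∀ ℓ, U ℓ ∈ unitary (E →L[ℂ] E))
    (P : EuclideanSpace ℂ ι →L[ℂ] EuclideanSpace ℂ ι)
    (hP : P ∈ unitary (EuclideanSpace ℂ ι →L[ℂ] EuclideanSpace ℂ ι))
    (hP0 : P (EuclideanSpace.single z 1) =
      ∑ ℓ, ((Real.sqrt (α ℓ / lam) : ℝ) : ℂ) • EuclideanSpace.single ℓ 1)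
    -- the tensor-product operators `PREP ⊗ I`, `PREP† ⊗ I` and `SEL`, realized on `ι → E`
    (prepT prepAdjT selT : (ι → E) → (ι → E))
    (hprepT : ∀ (f : ι → E) (ℓ : ι),
      prepT f ℓ = ∑ ℓ', (P (EuclideanSpace.single ℓ' 1) ℓ) • f ℓ')
    (hprepAdjT : ∀ (f : ι → E) (ℓ : ι),
      prepAdjT f ℓ =
        ∑ ℓ', ((ContinuousLinearMap.adjoint P) (EuclideanSpace.single ℓ' 1) ℓ) • f ℓ')
    (hselT : ∀ (f : ι → E) (ℓ : ι), selT f ℓ = U ℓ (f ℓ)) :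
    ∀ ψ : E, prepAdjT (selT (prepT (Pi.single z ψ))) z
      = (lam : ℂ)⁻¹ • ∑ ℓ, ((α ℓ : ℝ) : ℂ) • U ℓ ψ :=
  stmt_19_general z α hα lam hlampos U P hP0 prepT prepAdjT selT hprepT hprepAdjT hselT
end
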